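/- arXiv:2506.22214 — 4 statements merged into one kernel-verified Lean document; each statement's English description precedes it below -/
import Mathlib

section
/- Let G = (V,E) be a 5-regular, 3-sparse graph with no 6-set. Let Y, Z ⊂ V with |Y|, |Z| ≥ 6, where Y is a j-set and Z is a k-set for some j, k ∈ {7,8}. Suppose the induced subgraphs G[Y] and G[Z] both have minimum degree 3 and Y ∩ Z = {a,b} with ab ∈ E. Then j = k = 8. -/
open Finset

variable {V : Type*} [Fintype V] [DecidableEq V]

/-- `i(X)`: the number of edges of `G` with both endpoints in `X`. -/
def edgesWithin (G : SimpleGraph V) [DecidableRel G.Adj] (X : Finset V) : ℕ :=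
  ((X ×ˢ X).filter fun p => G.Adj p.1 p.2).card / 2

/-- `d(X,Y)`: the number of edges of `G` with one endpoint in `X \ Y` and the other in `Y \ X`. -/
def edgesBetween (G : SimpleGraph V) [DecidableRel G.Adj] (X Y : Finset V) : ℕ :=
  (((X \ Y) ×ˢ (Y \ X)).filter fun p => G.Adj p.1 p.2).card

/-- `G` is 3-sparse: `i(X) ≤ 3|X| - 6` for all `X` with `|X| ≥ 3`. -/
def Sparse3 (G : SimpleGraph V) [DecidableRel G.Adj] : Prop :=
  ∀ X : Finset V, 3 ≤ X.card → edgesWithin G X + 6 ≤ 3 * X.card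

/-- The set of common neighbours of `u` and `v`. -/
def commonNbrs (G : SimpleGraph V) [DecidableRel G.Adj] (u v : V) : Finset V :=
  Finset.univ.filter fun t => G.Adj u t ∧ G.Adj v t


lemma pairCount_eq_sum (G : SimpleGraph V) [DecidableRel G.Adj] (X : Finset V) :
    ((X ×ˢ X).filter fun p => G.Adj p.1 p.2).card
      = ∑ x ∈ X, (X.filter fun u => G.Adj x u).card := by
  rw [Finset.card_filter, Finset.sum_product]
  exact Finset.sum_congr rfl fun x _ => (Finset.card_filter _ _).symm

lemma pairCount_erase (G : SimpleGraph V) [DecidableRel G.Adj] (X : Finset V) (v : V)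
    (hv : v ∈ X) :
    ((X ×ˢ X).filter fun p => G.Adj p.1 p.2).card
      = (((X.erase v) ×ˢ (X.erase v)).filter fun p => G.Adj p.1 p.2).card
        + 2 * (X.filter fun u => G.Adj v u).card := by
  rw [pairCount_eq_sum, pairCount_eq_sum, ← Finset.add_sum_erase _ _ hv]
  have h1 : ∀ x ∈ X.erase v, (X.filter fun u => G.Adj x u).card
      = ((X.erase v).filter fun u => G.Adj x u).card + (if G.Adj x v then 1 else 0) := by
    intro x hx
    have hXi : X = insert v (X.erase v) := (Finset.insert_erase hv).symm
    conv_lhs => rw [hXi]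
    rw [Finset.filter_insert]
    split
    · rw [Finset.card_insert_of_notMem (by simp)]
    · simp
  rw [Finset.sum_congr rfl h1, Finset.sum_add_distrib]
  have h2 : (∑ x ∈ X.erase v, if G.Adj x v then 1 else 0)
      = (X.filter fun u => G.Adj v u).card := by
    rw [← Finset.card_filter]
    congr 1
    ext u
    simp only [Finset.mem_filter, Finset.mem_erase]
    constructor
    · rintro ⟨⟨_, hu⟩, h⟩; exact ⟨hu, h.symm⟩
    · rintro ⟨hu, h⟩; exact ⟨⟨fun e => G.irrefl (e ▸ h), hu⟩, h.symm⟩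
  have h3 : (X.filter fun u => G.Adj v u) = ((X.erase v).filter fun u => G.Adj v u) := by
    ext u
    simp only [Finset.mem_filter, Finset.mem_erase]
    constructor
    · rintro ⟨hu, h⟩; exact ⟨⟨fun e => G.irrefl (e ▸ h), hu⟩, h⟩
    · rintro ⟨⟨_, hu⟩, h⟩; exact ⟨hu, h⟩
  rw [h2]
  rw [show (X.filter fun u => G.Adj v u).card = ((X.erase v).filter fun u => G.Adj v u).card from by rw [h3]]
  ring

lemma pairCount_even (G : SimpleGraph V) [DecidableRel G.Adj] (X : Finset V) :
    Even ((X ×ˢ X).filter fun p => G.Adj p.1 p.2).card := by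
  induction X using Finset.induction_on with
  | empty => simp
  | @insert v s h ih =>
    rw [pairCount_erase G _ v (Finset.mem_insert_self v s), Finset.erase_insert h]
    exact ih.add (even_two_mul _)

/-- `edgesWithin` is half of the ordered pair count, exactly. -/
lemma two_mul_edgesWithin (G : SimpleGraph V) [DecidableRel G.Adj] (X : Finset V) :
    2 * edgesWithin G X = ((X ×ˢ X).filter fun p => G.Adj p.1 p.2).card := by
  obtain ⟨m, hm⟩ := pairCount_even G X
  unfold edgesWithin
  omega

lemma edgesWithin_erase (G : SimpleGraph V) [DecidableRel G.Adj] (X : Finset V) (v : V)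
    (hv : v ∈ X) :
    edgesWithin G X = edgesWithin G (X.erase v) + (X.filter fun u => G.Adj v u).card := by
  have h1 := two_mul_edgesWithin G X
  have h2 := two_mul_edgesWithin G (X.erase v)
  have h3 := pairCount_erase G X v hv
  omega

theorem stmt5 (G : SimpleGraph V) [DecidableRel G.Adj]
    (hreg : ∀ v, G.degree v = 5) (hsp : Sparse3 G)
    (h6 : ¬ ∃ X : Finset V, 3 ≤ X.card ∧ edgesWithin G X + 6 = 3 * X.card)
    (Y Z : Finset V) (hY6 : 6 ≤ Y.card) (hZ6 : 6 ≤ Z.card)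
    (j k : ℕ) (hj : j = 7 ∨ j = 8) (hk : k = 7 ∨ k = 8)
    (hYj : edgesWithin G Y + j = 3 * Y.card)
    (hZk : edgesWithin G Z + k = 3 * Z.card)
    (hYdeg : ∀ v ∈ Y, 3 ≤ (Y.filter fun u => G.Adj v u).card)
    (hZdeg : ∀ v ∈ Z, 3 ≤ (Z.filter fun u => G.Adj v u).card)
    (a b : V) (hab : a ≠ b) (hadj : G.Adj a b) (hint : Y ∩ Z = {a, b}) :
    j = 8 ∧ k = 8 := by
  -- membership facts
  have haY : a ∈ Y := by
    have : a ∈ Y ∩ Z := by rw [hint]; simp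
    exact (Finset.mem_inter.mp this).1
  have haZ : a ∈ Z := by
    have : a ∈ Y ∩ Z := by rw [hint]; simp
    exact (Finset.mem_inter.mp this).2
  have hbY : b ∈ Y := by
    have : b ∈ Y ∩ Z := by rw [hint]; simp
    exact (Finset.mem_inter.mp this).1
  have hbZ : b ∈ Z := by
    have : b ∈ Y ∩ Z := by rw [hint]; simp
    exact (Finset.mem_inter.mp this).2
  -- degree-3 facts: for v ∈ {a,b}, deg_Y v = 3 and deg_Z v = 3
  have key : ∀ v w : V, v ∈ Y → v ∈ Z → w ∈ Y → w ∈ Z → G.Adj v w →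
      (∀ u, u ∈ Y ∩ Z → u = v ∨ u = w) →
      (Y.filter fun u => G.Adj v u).card = 3 ∧ (Z.filter fun u => G.Adj v u).card = 3 := by
    intro v w hvY hvZ hwY hwZ hvw hmem
    set A := Y.filter fun u => G.Adj v u with hA
    set B := Z.filter fun u => G.Adj v u with hB
    have hAB : A ∩ B = {w} := by
      ext u
      simp only [hA, hB, Finset.mem_inter, Finset.mem_filter, Finset.mem_singleton]
      constructor
      · rintro ⟨⟨huY, hu⟩, ⟨huZ, _⟩⟩
        rcases hmem u (Finset.mem_inter.mpr ⟨huY, huZ⟩) with h | h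
        · exact absurd (h ▸ hu) (G.irrefl)
        · exact h
      · rintro rfl; exact ⟨⟨hwY, hvw⟩, ⟨hwZ, hvw⟩⟩
    have hsub : A ∪ B ⊆ G.neighborFinset v := by
      intro u hu
      rw [SimpleGraph.mem_neighborFinset]
      rcases Finset.mem_union.mp hu with h | h
      · exact (Finset.mem_filter.mp h).2
      · exact (Finset.mem_filter.mp h).2
    have hcard : (A ∪ B).card ≤ 5 := by
      have := Finset.card_le_card hsub
      rwa [SimpleGraph.card_neighborFinset_eq_degree, hreg v] at this
    have h1 := Finset.card_union_add_card_inter A B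
    rw [hAB, Finset.card_singleton] at h1
    have hAge := hYdeg v hvY
    have hBge := hZdeg v hvZ
    rw [← hA] at hAge
    rw [← hB] at hBge
    constructor <;> omega
  have hmemab : ∀ u, u ∈ Y ∩ Z → u = a ∨ u = b := by
    intro u hu; rw [hint] at hu; simpa using hu
  have hmemba : ∀ u, u ∈ Y ∩ Z → u = b ∨ u = a := by
    intro u hu; rcases hmemab u hu with h | h
    · exact Or.inr h
    · exact Or.inl h
  obtain ⟨hYa3, hZa3⟩ := key a b haY haZ hbY hbZ hadj hmemab
  obtain ⟨hYb3, hZb3⟩ := key b a hbY hbZ haY haZ hadj.symm hmemba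
  -- removal lemma: if a set is a 7-set then removing a,b gives a 6-set
  have main : ∀ (X : Finset V), 6 ≤ X.card → a ∈ X → b ∈ X →
      (X.filter fun u => G.Adj a u).card = 3 → (X.filter fun u => G.Adj b u).card = 3 →
      edgesWithin G X + 7 ≠ 3 * X.card := by
    intro X hX6 haX hbX ha3 hb3 hX7
    set W := (X.erase a).erase b with hW
    have hbX' : b ∈ X.erase a := Finset.mem_erase.mpr ⟨hab.symm, hbX⟩
    have e1 := edgesWithin_erase G X a haX
    have e2 := edgesWithin_erase G (X.erase a) b hbX'
    rw [← hW] at e2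
    -- count of b-neighbours in X.erase a is one less (a is a neighbour of b in X)
    have hfe : (X.erase a).filter (fun u => G.Adj b u)
        = (X.filter fun u => G.Adj b u).erase a := Finset.filter_erase _ _ _
    have haf : a ∈ X.filter fun u => G.Adj b u :=
      Finset.mem_filter.mpr ⟨haX, hadj.symm⟩
    have hc : ((X.erase a).filter (fun u => G.Adj b u)).card = 2 := by
      rw [hfe, Finset.card_erase_of_mem haf, hb3]
    have hWcard : W.card = X.card - 2 := by
      rw [hW, Finset.card_erase_of_mem hbX', Finset.card_erase_of_mem haX]
      omega
    have hW3 : 3 ≤ W.card := by omega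
    exact h6 ⟨W, hW3, by omega⟩
  constructor
  · rcases hj with h | h
    · exact absurd (h ▸ hYj) (main Y hY6 haY hbY hYa3 hYb3)
    · exact h
  · rcases hk with h | h
    · exact absurd (h ▸ hZk) (main Z hZ6 haZ hbZ hZa3 hZb3)
    · exact h
end

section
/- Let G = (V,E) be a 3-sparse, 5-regular graph and let X, Y ⊂ V be 7-sets (i.e., i(X) = 3|X| - 7 and i(Y) = 3|Y| - 7) with |X ∩ Y| ≥ 3. Then d(X,Y) ≤ 2, and X ∪ Y is an m-set and X ∩ Y is an n-set with m, n ≥ 6 and m + n = 14 - d(X,Y). -/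
open Finset

variable {V : Type*} [Fintype V] [DecidableEq V]

lemma dcount_even (G : SimpleGraph V) [DecidableRel G.Adj] (X : Finset V) :
    2 ∣ ((X ×ˢ X).filter fun p => G.Adj p.1 p.2).card := by
  rw [← ZMod.natCast_eq_zero_iff _ 2, Finset.card_eq_sum_ones, Nat.cast_sum]
  refine Finset.sum_involution (fun p _ => p.swap) (fun p hp => by norm_num; decide)
    (fun p hp h => ?_) (fun p hp => ?_) (fun p hp => Prod.swap_swap p)
  · simp only [Finset.mem_filter] at hp
    intro hc
    exact (hp.2.ne' (congrArg Prod.fst hc))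
  · simp only [Finset.mem_filter, Finset.mem_product] at hp ⊢
    exact ⟨⟨hp.1.2, hp.1.1⟩, hp.2.symm⟩

lemma card_swap_eq (G : SimpleGraph V) [DecidableRel G.Adj] (A B : Finset V) :
    ((A ×ˢ B).filter fun p => G.Adj p.1 p.2).card
      = ((B ×ˢ A).filter fun p => G.Adj p.1 p.2).card := by
  apply Finset.card_bij (fun p _ => p.swap)
  · intro p hp
    simp only [Finset.mem_filter, Finset.mem_product] at hp ⊢
    exact ⟨⟨hp.1.2, hp.1.1⟩, hp.2.symm⟩
  · intro p _ q _ h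
    exact Prod.swap_injective h
  · intro p hp
    simp only [Finset.mem_filter, Finset.mem_product] at hp
    exact ⟨p.swap, by simp [Finset.mem_filter, Finset.mem_product, hp.1.1, hp.1.2, hp.2.symm],
      (Prod.swap_swap p).symm⟩

lemma card_as_sum (G : SimpleGraph V) [DecidableRel G.Adj] (A B : Finset V) :
    ((A ×ˢ B).filter fun p => G.Adj p.1 p.2).card
      = ∑ p ∈ Finset.univ ×ˢ (Finset.univ : Finset V),
          (if p.1 ∈ A ∧ p.2 ∈ B ∧ G.Adj p.1 p.2 then 1 else 0) := by
  rw [← Finset.card_filter]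
  congr 1
  ext p
  simp [Finset.mem_filter, Finset.mem_product, and_assoc]

lemma main_identity (G : SimpleGraph V) [DecidableRel G.Adj] (X Y : Finset V) :
    (((X ∪ Y) ×ˢ (X ∪ Y)).filter fun p => G.Adj p.1 p.2).card
      + (((X ∩ Y) ×ˢ (X ∩ Y)).filter fun p => G.Adj p.1 p.2).card
    = ((X ×ˢ X).filter fun p => G.Adj p.1 p.2).card
      + ((Y ×ˢ Y).filter fun p => G.Adj p.1 p.2).card
      + 2 * (((X \ Y) ×ˢ (Y \ X)).filter fun p => G.Adj p.1 p.2).card := by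
  have hswap := card_swap_eq G (X \ Y) (Y \ X)
  rw [card_as_sum, card_as_sum, card_as_sum, card_as_sum,
    two_mul, (by rw [hswap] : (((X \ Y) ×ˢ (Y \ X)).filter fun p => G.Adj p.1 p.2).card
      + (((X \ Y) ×ˢ (Y \ X)).filter fun p => G.Adj p.1 p.2).card
      = (((X \ Y) ×ˢ (Y \ X)).filter fun p => G.Adj p.1 p.2).card
      + (((Y \ X) ×ˢ (X \ Y)).filter fun p => G.Adj p.1 p.2).card),
    card_as_sum, card_as_sum, ← Finset.sum_add_distrib, ← Finset.sum_add_distrib,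
    ← Finset.sum_add_distrib, ← Finset.sum_add_distrib]
  apply Finset.sum_congr rfl
  intro p _
  by_cases h : G.Adj p.1 p.2 <;>
  by_cases h1 : p.1 ∈ X <;> by_cases h2 : p.1 ∈ Y <;>
  by_cases h3 : p.2 ∈ X <;> by_cases h4 : p.2 ∈ Y <;>
  simp [Finset.mem_union, Finset.mem_inter, Finset.mem_sdiff, h, h1, h2, h3, h4]

theorem stmt8 (G : SimpleGraph V) [DecidableRel G.Adj]
    (hreg : ∀ v, G.degree v = 5) (hsp : Sparse3 G)
    (X Y : Finset V)
    (hX : edgesWithin G X + 7 = 3 * X.card)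
    (hY : edgesWithin G Y + 7 = 3 * Y.card)
    (hXY : 3 ≤ (X ∩ Y).card) :
    edgesBetween G X Y ≤ 2 ∧
    ∃ m n : ℕ, 6 ≤ m ∧ 6 ≤ n ∧ m + n + edgesBetween G X Y = 14 ∧
      edgesWithin G (X ∪ Y) + m = 3 * (X ∪ Y).card ∧
      edgesWithin G (X ∩ Y) + n = 3 * (X ∩ Y).card := by
  have key := main_identity G X Y
  have dU := dcount_even G (X ∪ Y)
  have dI := dcount_even G (X ∩ Y)
  have dX := dcount_even G X
  have dY := dcount_even G Y
  have hU3 : 3 ≤ (X ∪ Y).card :=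
    le_trans hXY (Finset.card_le_card (Finset.inter_subset_union))
  have sU := hsp (X ∪ Y) hU3
  have sI := hsp (X ∩ Y) hXY
  have hcard := Finset.card_union_add_card_inter X Y
  unfold edgesWithin edgesBetween at *
  refine ⟨by omega,
    3 * (X ∪ Y).card - (((X ∪ Y) ×ˢ (X ∪ Y)).filter fun p => G.Adj p.1 p.2).card / 2,
    3 * (X ∩ Y).card - (((X ∩ Y) ×ˢ (X ∩ Y)).filter fun p => G.Adj p.1 p.2).card / 2,
    by omega, by omega, by omega, by omega, by omega⟩
end

section
/- Let G = (V,E) be a 3-sparse, 5-regular graph and let X, Y ⊂ V be 7-sets with X ∩ Y = {a,b} and ab ∈ E. Then d(X,Y) ≤ 3 and i(X ∪ Y) = 3|X ∪ Y| - 9 + d(X,Y). -/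
open Finset

variable {V : Type*} [Fintype V] [DecidableEq V]

/-!
Every edge of `X ∪ Y` lies in `X`, in `Y`, or between `X \ Y` and `Y \ X`, and exactly the edges
inside `X ∩ Y` are counted twice, so `i(X ∪ Y) + i(X ∩ Y) = i(X) + i(Y) + d(X,Y)`. With
`i(X) = 3|X| - 7`, `i(Y) = 3|Y| - 7`, `i({a,b}) = 1` and `|X ∪ Y| = |X| + |Y| - 2` this is the
claimed formula for `i(X ∪ Y)`, and sparsity of `X ∪ Y` then forces `d(X,Y) ≤ 3`.
-/

namespace Rel

variable {α : Type*} [DecidableEq α] (r : α → α → Prop) [DecidableRel r]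

theorem card_interedges_union_add_card_interedges_inter (X Y : Finset α) :
    #(interedges r (X ∪ Y) (X ∪ Y)) + #(interedges r (X ∩ Y) (X ∩ Y)) =
      #(interedges r X X) + #(interedges r Y Y) +
        #(interedges r (X \ Y) (Y \ X)) + #(interedges r (Y \ X) (X \ Y)) := by
  have hinter : interedges r X X ∩ interedges r Y Y = interedges r (X ∩ Y) (X ∩ Y) := by
    ext; simp only [mem_inter, mem_interedges_iff]; tauto
  have hunion : interedges r (X ∪ Y) (X ∪ Y) =
      (interedges r X X ∪ interedges r Y Y) ∪
        (interedges r (X \ Y) (Y \ X) ∪ interedges r (Y \ X) (X \ Y)) := by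
    ext; simp only [mem_union, mem_sdiff, mem_interedges_iff]; tauto
  have hdisj_cross : Disjoint (interedges r (X \ Y) (Y \ X)) (interedges r (Y \ X) (X \ Y)) := by
    rw [disjoint_left]; simp only [mem_sdiff, mem_interedges_iff]; tauto
  have hdisj : Disjoint (interedges r X X ∪ interedges r Y Y)
      (interedges r (X \ Y) (Y \ X) ∪ interedges r (Y \ X) (X \ Y)) := by
    rw [disjoint_left]; simp only [mem_union, mem_sdiff, mem_interedges_iff]; tauto
  rw [hunion, card_union_of_disjoint hdisj, card_union_of_disjoint hdisj_cross, ← hinter]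
  have := card_union_add_card_inter (interedges r X X) (interedges r Y Y)
  omega

end Rel

section EdgeCounts

variable (G : SimpleGraph V) [DecidableRel G.Adj]

theorem two_mul_edgesWithin_s9 (S : Finset V) : 2 * edgesWithin G S = #(G.interedges S S) := by
  classical
  set H := ((⊤ : G.Subgraph).induce (S : Set V)).spanningCoe
  have hH : #(G.interedges S S) = 2 * #H.edgeFinset := by
    rw [H.two_mul_card_edgeFinset]
    congr 1
    ext ⟨u, v⟩
    simp [H, SimpleGraph.mk_mem_interedges_iff]
  rw [edgesWithin, ← SimpleGraph.interedges_def, hH, Nat.mul_div_cancel_left _ two_pos]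

theorem edgesWithin_pair_of_adj {a b : V} (hab : G.Adj a b) : edgesWithin G {a, b} = 1 := by
  have hpairs : G.interedges {a, b} {a, b} = {(a, b), (b, a)} := by
    ext ⟨u, v⟩
    simp only [SimpleGraph.mk_mem_interedges_iff, mem_insert, mem_singleton, Prod.mk.injEq]
    constructor
    · rintro ⟨rfl | rfl, rfl | rfl, huv⟩ <;> simp_all
    · rintro (⟨rfl, rfl⟩ | ⟨rfl, rfl⟩)
      exacts [⟨by simp, by simp, hab⟩, ⟨by simp, by simp, hab.symm⟩]
  have htwo := two_mul_edgesWithin_s9 G {a, b}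
  rw [hpairs, card_pair (by simp [hab.ne])] at htwo
  omega

theorem edgesWithin_union_add_edgesWithin_inter (X Y : Finset V) :
    edgesWithin G (X ∪ Y) + edgesWithin G (X ∩ Y) =
      edgesWithin G X + edgesWithin G Y + edgesBetween G X Y := by
  have hcount : #(G.interedges (X ∪ Y) (X ∪ Y)) + #(G.interedges (X ∩ Y) (X ∩ Y)) =
      #(G.interedges X X) + #(G.interedges Y Y) + edgesBetween G X Y +
        #(G.interedges (Y \ X) (X \ Y)) :=
    Rel.card_interedges_union_add_card_interedges_inter G.Adj X Y
  have hcomm : #(G.interedges (Y \ X) (X \ Y)) = edgesBetween G X Y :=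
    have := G.symm
    Rel.card_interedges_comm _ _
  rw [← two_mul_edgesWithin_s9, ← two_mul_edgesWithin_s9, ← two_mul_edgesWithin_s9,
    ← two_mul_edgesWithin_s9, hcomm] at hcount
  omega

end EdgeCounts

theorem stmt9_general (G : SimpleGraph V) [DecidableRel G.Adj]
    (hsp : Sparse3 G)
    (X Y : Finset V)
    (hX : edgesWithin G X + 7 = 3 * X.card)
    (hY : edgesWithin G Y + 7 = 3 * Y.card)
    (a b : V) (hadj : G.Adj a b) (hint : X ∩ Y = {a, b}) :
    edgesBetween G X Y ≤ 3 ∧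
    edgesWithin G (X ∪ Y) + 9 = 3 * (X ∪ Y).card + edgesBetween G X Y := by
  have hedges := edgesWithin_union_add_edgesWithin_inter G X Y
  rw [hint, edgesWithin_pair_of_adj G hadj] at hedges
  have hcard := card_union_add_card_inter X Y
  rw [hint, card_pair hadj.ne] at hcard
  have hXY : 3 ≤ (X ∪ Y).card := (by omega : 3 ≤ X.card).trans (card_le_card subset_union_left)
  have hsparse := hsp (X ∪ Y) hXY
  omega

theorem stmt9 (G : SimpleGraph V) [DecidableRel G.Adj]
    (hreg : ∀ v, G.degree v = 5) (hsp : Sparse3 G)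
    (X Y : Finset V)
    (hX : edgesWithin G X + 7 = 3 * X.card)
    (hY : edgesWithin G Y + 7 = 3 * Y.card)
    (a b : V) (hab : a ≠ b) (hadj : G.Adj a b) (hint : X ∩ Y = {a, b}) :
    edgesBetween G X Y ≤ 3 ∧
    edgesWithin G (X ∪ Y) + 9 = 3 * (X ∪ Y).card + edgesBetween G X Y :=
  stmt9_general G hsp X Y hX hY a b hadj hint
end

section
/- Let G = (V,E) be a 3-sparse graph containing an edge e = uv that lies in exactly one triangle {u,v,w}, and suppose the graph G/e obtained by contracting e is not 3-sparse. Then there exists X ⊂ V with u,v ∈ X and |X| ≥ 6 such that either (a) i(X) = 3|X| - 6, or (b) w ∉ X and i(X) = 3|X| - 7. -/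
/-! Every ordered adjacent pair of `G/uv` lifts injectively to one of `G`, reading the merged
vertex as `u` or `v`. The lifts miss `(u, v)`, `(v, u)` and, for each common neighbour `x` of
`u` and `v`, the pairs `(v, x)`, `(x, v)`. Let `Y` violate sparsity in `G/uv`; counting pairs
gives `|Y| ≥ 5`. If the merged vertex is not in `Y`, then `Y` violates sparsity of `G` itself.
Otherwise `X = Y ∪ {v}` has `i(X) ≥ i_{G/uv}(Y) + 1 + [w ∈ X] ≥ 3|X| - 7 + [w ∈ X]`, and
`i(X) ≤ 3|X| - 6` leaves exactly the two alternatives. -/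

open Finset

variable {V : Type*} [Fintype V] [DecidableEq V]

/-- The graph obtained from G by identifying the two vertices u and v into u
(the vertex v is removed); for adjacent u, v this is edge contraction G/uv,
with parallel edges simplified. -/
def contractPair (G : SimpleGraph V) (u v : V) : SimpleGraph {x : V // x ≠ v} where
  Adj a b := a ≠ b ∧
    (G.Adj a.1 b.1 ∨ (a.1 = u ∧ G.Adj v b.1) ∨ (b.1 = u ∧ G.Adj a.1 v))
  symm := ⟨by
    rintro a b ⟨hab, h⟩
    refine ⟨hab.symm, ?_⟩
    rcases h with h | ⟨h1, h2⟩ | ⟨h1, h2⟩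
    · exact Or.inl h.symm
    · exact Or.inr (Or.inr ⟨h1, h2.symm⟩)
    · exact Or.inr (Or.inl ⟨h1, h2.symm⟩)⟩
  loopless := ⟨fun a h => h.1 rfl⟩

instance (G : SimpleGraph V) [DecidableRel G.Adj] (u v : V) :
    DecidableRel (contractPair G u v).Adj := fun a b =>
  inferInstanceAs (Decidable (a ≠ b ∧
    (G.Adj a.1 b.1 ∨ (a.1 = u ∧ G.Adj v b.1) ∨ (b.1 = u ∧ G.Adj a.1 v))))

section AdjPairs

variable {W : Type*}

def adjPairs (H : SimpleGraph W) [DecidableRel H.Adj] (X : Finset W) : Finset (W × W) :=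
  (X ×ˢ X).filter fun p => H.Adj p.1 p.2

theorem edgesWithin_eq_card_adjPairs_div_two (H : SimpleGraph W) [DecidableRel H.Adj]
    (X : Finset W) : edgesWithin H X = #(adjPairs H X) / 2 := rfl

theorem card_adjPairs_le [DecidableEq W] (H : SimpleGraph W) [DecidableRel H.Adj]
    (X : Finset W) : #(adjPairs H X) ≤ #X * #X - #X := by
  rw [← offDiag_card]
  refine card_le_card fun p hp => ?_
  simp only [adjPairs, mem_filter, mem_product] at hp
  exact mem_offDiag.2 ⟨hp.1.1, hp.1.2, hp.2.ne⟩

theorem five_le_card_of_three_mul_card_lt [DecidableEq W] (H : SimpleGraph W)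
    [DecidableRel H.Adj] {X : Finset W} (h3 : 3 ≤ #X) (h : 3 * #X < edgesWithin H X + 6) :
    5 ≤ #X := by
  have hle := card_adjPairs_le H X
  rw [edgesWithin_eq_card_adjPairs_div_two] at h
  by_contra
  obtain h' | h' : #X = 3 ∨ #X = 4 := by omega
  all_goals rw [h'] at h hle; omega

end AdjPairs

section Contraction

variable {W : Type*} [DecidableEq W] (G : SimpleGraph W) [DecidableRel G.Adj] (u v : W)

/-- An edge `ab` of `G/uv` comes from the edge `(liftEnd a b, liftEnd b a)` of `G`: the merged
vertex is read as `v` exactly when `ub` is not an edge of `G`. -/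
def liftEnd (a b : {x // x ≠ v}) : W :=
  if a.1 = u ∧ ¬ G.Adj u b.1 then v else a.1

def liftPair (p : {x // x ≠ v} × {x // x ≠ v}) : W × W :=
  (liftEnd G u v p.1 p.2, liftEnd G u v p.2 p.1)

variable {G u v}

theorem eq_of_liftEnd_eq {a b a' b' : {x // x ≠ v}}
    (h : liftEnd G u v a b = liftEnd G u v a' b') : a = a' := by
  have := a.2; have := a'.2
  unfold liftEnd at h
  split_ifs at h <;> grind

theorem liftPair_injective : Function.Injective (liftPair G u v) :=
  fun _ _ h => Prod.ext (eq_of_liftEnd_eq (congrArg Prod.fst h))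
    (eq_of_liftEnd_eq (congrArg Prod.snd h))

theorem adj_liftEnd {a b : {x // x ≠ v}} (h : (contractPair G u v).Adj a b) :
    G.Adj (liftEnd G u v a b) (liftEnd G u v b a) := by
  obtain ⟨hab, h⟩ := h
  have : a.1 ≠ b.1 := fun h => hab (Subtype.ext h)
  unfold liftEnd
  split_ifs <;> grind [SimpleGraph.Adj.symm]

/-- The common neighbours of `u` and `v` are where contraction loses edges. -/
theorem liftEnd_ne_of_liftEnd_eq {x : W} (hxv : x ≠ v) (hx : x = u ∨ G.Adj u x)
    {a b : {x // x ≠ v}} (h : liftEnd G u v a b = v) : liftEnd G u v b a ≠ x := by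
  have := a.2; have := b.2
  unfold liftEnd at *
  split_ifs at * <;> grind [SimpleGraph.irrefl]

theorem liftPair_mem_adjPairs {Y : Finset {x // x ≠ v}} {X : Finset W}
    (hYX : ∀ a ∈ Y, a.1 ∈ X) (hvX : ∀ a ∈ Y, a.1 = u → v ∈ X) {p}
    (hp : p ∈ adjPairs (contractPair G u v) Y) : liftPair G u v p ∈ adjPairs G X := by
  simp only [adjPairs, mem_filter, mem_product] at hp ⊢
  have hmem : ∀ a ∈ Y, ∀ b, liftEnd G u v a b ∈ X := fun a ha b => by
    unfold liftEnd
    split_ifs with h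
    exacts [hvX a ha h.1, hYX a ha]
  exact ⟨⟨hmem _ hp.1.1 _, hmem _ hp.1.2 _⟩, adj_liftEnd hp.2⟩

theorem edgesWithin_contractPair_le {Y : Finset {x // x ≠ v}} {X : Finset W}
    (hYX : ∀ a ∈ Y, a.1 ∈ X) (hvX : ∀ a ∈ Y, a.1 = u → v ∈ X) :
    edgesWithin (contractPair G u v) Y ≤ edgesWithin G X :=
  Nat.div_le_div_right <| card_le_card_of_injOn _
    (fun _ hp => liftPair_mem_adjPairs hYX hvX hp) liftPair_injective.injOn

/-- Each `x ∈ s` accounts for the two pairs `(v, x)`, `(x, v)` that are not lifts of pairs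
of `G/uv`. -/
theorem edgesWithin_contractPair_add_card_le (hadj : G.Adj u v) (Y : Finset {x // x ≠ v})
    (s : Finset W) (hs : ∀ x ∈ s, x ∈ Y.map (.subtype _) ∧ (x = u ∨ G.Adj u x) ∧ G.Adj v x) :
    edgesWithin (contractPair G u v) Y + #s ≤
      edgesWithin G (insert v (Y.map (.subtype _))) := by
  rw [edgesWithin_eq_card_adjPairs_div_two, edgesWithin_eq_card_adjPairs_div_two]
  set T := adjPairs G (insert v (Y.map (.subtype _)))
  set Q := s ×ˢ {v} ∪ {v} ×ˢ s
  have hvs : v ∉ s := fun hv => (hs v hv).2.2.ne rfl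
  have hQ : #Q = 2 * #s := by
    rw [card_union_of_disjoint, card_product, card_product, card_singleton]
    · ring
    · simp only [disjoint_left, mem_product, mem_singleton]
      rintro q ⟨hq, -⟩ ⟨hqv, -⟩
      exact hvs (hqv ▸ hq)
  have hQT : Q ⊆ T := by
    intro q hq
    simp only [Q, T, adjPairs, mem_union, mem_product, mem_singleton, mem_filter,
      mem_insert] at hq ⊢
    rcases hq with ⟨hx, rfl⟩ | ⟨rfl, hx⟩
    · exact ⟨⟨Or.inr (hs _ hx).1, Or.inl rfl⟩, (hs _ hx).2.2.symm⟩
    · exact ⟨⟨Or.inl rfl, Or.inr (hs _ hx).1⟩, (hs _ hx).2.2⟩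
  have hlift : #(adjPairs (contractPair G u v) Y) ≤ #(T \ Q) := by
    refine card_le_card_of_injOn (liftPair G u v) (fun p hp => mem_sdiff.2 ⟨?_, ?_⟩)
      liftPair_injective.injOn
    · exact liftPair_mem_adjPairs (fun _ ha => mem_insert_of_mem (mem_map_of_mem _ ha))
        (fun _ _ _ => mem_insert_self _ _) hp
    · simp only [Q, liftPair, mem_union, mem_product, mem_singleton]
      rintro (⟨hx, h⟩ | ⟨h, hx⟩) <;>
        exact liftEnd_ne_of_liftEnd_eq (hs _ hx).2.2.ne' (hs _ hx).2.1 h rfl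
  rw [card_sdiff_of_subset hQT, hQ] at hlift
  have := card_le_card hQT
  omega

theorem Sparse3.mem_map_subtype_of_three_mul_card_lt (hsp : Sparse3 G)
    {Y : Finset {x // x ≠ v}} (h3 : 3 ≤ #Y)
    (hY : 3 * #Y < edgesWithin (contractPair G u v) Y + 6) : u ∈ Y.map (.subtype _) := by
  by_contra hu
  have hle : edgesWithin (contractPair G u v) Y ≤ edgesWithin G (Y.map (.subtype _)) :=
    edgesWithin_contractPair_le (fun _ ha => mem_map_of_mem _ ha)
      (fun a ha hau => (hu (by rw [← hau]; exact mem_map_of_mem _ ha)).elim)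
  have := hsp (Y.map (.subtype _)) (by rwa [card_map])
  rw [card_map] at this
  omega

theorem edgesWithin_contractPair_add_card_commonNbrs_le [Fintype W] (hadj : G.Adj u v)
    {Y : Finset {x // x ≠ v}} (hu : u ∈ Y.map (.subtype _)) :
    edgesWithin (contractPair G u v) Y + 1 + #(commonNbrs G u v ∩ Y.map (.subtype _)) ≤
      edgesWithin G (insert v (Y.map (.subtype _))) := by
  have h := edgesWithin_contractPair_add_card_le hadj Y
    (insert u (commonNbrs G u v ∩ Y.map (.subtype _))) <| by
      intro x hx
      rcases mem_insert.1 hx with rfl | hx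
      · exact ⟨hu, Or.inl rfl, hadj.symm⟩
      · obtain ⟨hcx, hx⟩ := mem_inter.1 hx
        obtain ⟨hux, hvx⟩ := (mem_filter.1 hcx).2
        exact ⟨hx, Or.inr hux, hvx⟩
  rw [card_insert_of_notMem (by simp [commonNbrs])] at h
  omega

end Contraction

theorem stmt17 (G : SimpleGraph V) [DecidableRel G.Adj] (hsp : Sparse3 G)
    (u v w : V) (hadj : G.Adj u v)
    (hcn : commonNbrs G u v = {w})
    (hnot : ¬ Sparse3 (contractPair G u v)) :
    ∃ X : Finset V, u ∈ X ∧ v ∈ X ∧ 6 ≤ X.card ∧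
      (edgesWithin G X + 6 = 3 * X.card ∨
       (w ∉ X ∧ edgesWithin G X + 7 = 3 * X.card)) := by
  obtain ⟨Y, hY3, hY⟩ : ∃ Y, 3 ≤ #Y ∧ 3 * #Y < edgesWithin (contractPair G u v) Y + 6 := by
    simpa [Sparse3] using hnot
  have hY5 := five_le_card_of_three_mul_card_lt _ hY3 hY
  have hu := hsp.mem_map_subtype_of_three_mul_card_lt hY3 hY
  have hlift := edgesWithin_contractPair_add_card_commonNbrs_le hadj hu
  set Yv := Y.map (Function.Embedding.subtype _)
  have hX : #(insert v Yv) = #Y + 1 := by rw [card_insert_of_notMem (by simp [Yv]), card_map]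
  have hspX := hsp (insert v Yv) (by omega)
  refine ⟨insert v Yv, mem_insert_of_mem hu, mem_insert_self _ _, by omega, ?_⟩
  rw [hcn] at hlift
  by_cases hwY : w ∈ Yv
  · rw [singleton_inter_of_mem hwY, card_singleton] at hlift
    omega
  · rw [singleton_inter_of_notMem hwY, card_empty] at hlift
    have hvw : G.Adj v w := (mem_filter.1 (hcn ▸ mem_singleton_self w)).2.2
    by_cases htight : edgesWithin G (insert v Yv) + 6 = 3 * #(insert v Yv)
    · exact Or.inl htight
    · exact Or.inr ⟨by simp [hwY, hvw.ne'], by omega⟩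
end
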